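/- Let x : V → U (V ⊆ ℝ^{n−1} open) be a smooth hypersurface parametrization with projection factors B^i_α = ∂x^i/∂u^α of rank n−1, and fix (u, v) with supporting element y^i = Σ_α B^i_α (u) v^α ≠ 0. Assume g_{ij}(x(u), y) is positive definite, L*(x(u), y) > 0, and Σ_i b_i(x(u)) N^i = 0, where N is the unit normal of (U,L) along the hypersurface. Assume further that the Randers conformal change is projective: G*^i = G^i + P y^i for a smooth scalar P. Then the normal curvature of the hypersurface in (U, L*), computed with the unit normal N* = N/√τ, satisfies H*_α = √τ H_α for every α, where H_α = Σ_i N_i ( Σ_β v^β ∂²x^i/∂u^β∂u^α + Σ_j N^i_j B^j_α ), H*_α = Σ_i N*_i ( Σ_β v^β ∂²x^i/∂u^β∂u^α + Σ_j N*^i_j B^j_α ), N_i = Σ_j g_{ij} N^j, N*_i = Σ_j g*_{ij} N*^j, N^i_j = ∂̇_j G^i, N*^i_j = ∂̇_j G*^i, and τ = e^{σ} L*/L. -/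

import Mathlib

/-!
Write `ℓ_i = ∂̇_i L`. Differentiating `L²` twice gives `g_ij = ℓ_i ℓ_j + L ∂̇_i∂̇_j L`, and in the
same way `g*_ij = (e^σ ℓ_i + b_i)(e^σ ℓ_j + b_j) + L* e^σ ∂̇_i∂̇_j L`. By Euler's theorem
`y^i g_ij = L ℓ_j`; since `y` is tangent to the hypersurface, `N` is `g`-orthogonal to it, so
`ℓ_j N^j = 0`. Together with `b_j N^j = 0` this gives `g*_ij N^j = τ g_ij N^j`, i.e. the lowered
normal `N*_i` equals `√τ N_i`. Projectivity gives `N*^i_j = N^i_j + P δ^i_j + y^i ∂̇_j P`, and both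
extra terms die against `N_i B^i_α = 0` and `N_i y^i = 0`.
-/

open Real

/-- Partial derivative with respect to the `i`-th `y`-coordinate. -/
noncomputable def pdy {n : ℕ} (f : (Fin n → ℝ) → ℝ) (i : Fin n) (y : Fin n → ℝ) : ℝ :=
  fderiv ℝ f y (Pi.single i 1)

/-- Partial derivative of a function of the position variable in the `i`-th direction. -/
noncomputable def pdx {n : ℕ} (f : (Fin n → ℝ) → ℝ) (i : Fin n) (x : Fin n → ℝ) : ℝ :=
  fderiv ℝ f x (Pi.single i 1)

/-- Second partial derivative with respect to the `y`-coordinates: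
`∂̇_i ∂̇_j f` evaluated at `y`. -/
noncomputable def pdy2 {n : ℕ} (f : (Fin n → ℝ) → ℝ) (i j : Fin n) (y : Fin n → ℝ) : ℝ :=
  fderiv ℝ (fun z => fderiv ℝ f z (Pi.single j 1)) y (Pi.single i 1)

/-- The fundamental (metric) tensor `g_{ij} = ½ ∂̇_i∂̇_j (L²)` of a Finsler metric `L`. -/
noncomputable def gten {n : ℕ} (L : (Fin n → ℝ) → (Fin n → ℝ) → ℝ)
    (x : Fin n → ℝ) (i j : Fin n) (y : Fin n → ℝ) : ℝ :=
  (1 / 2) * pdy2 (fun z => (L x z) ^ 2) i j y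

/-- The fundamental tensor as a matrix. -/
noncomputable def gmat {n : ℕ} (L : (Fin n → ℝ) → (Fin n → ℝ) → ℝ)
    (x y : Fin n → ℝ) : Matrix (Fin n) (Fin n) ℝ :=
  Matrix.of fun i j => gten L x i j y

/-- The geodesic spray coefficients `G^i = ½ γ^i_{jk} y^j y^k`, where
`γ^i_{jk} = ½ g^{ir} (∂g_{jr}/∂x^k + ∂g_{kr}/∂x^j − ∂g_{jk}/∂x^r)`. -/
noncomputable def spray {n : ℕ} (L : (Fin n → ℝ) → (Fin n → ℝ) → ℝ)
    (x y : Fin n → ℝ) (i : Fin n) : ℝ :=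
  (1 / 2) * ∑ j, ∑ k,
    ((1 / 2) * ∑ r, (gmat L x y)⁻¹ i r *
        (pdx (fun z => gten L z j r y) k x + pdx (fun z => gten L z k r y) j x
          - pdx (fun z => gten L z j k y) r x))
      * y j * y k

/-- The projection factors `B^i_α = ∂x^i/∂u^α` of a hypersurface parametrization. -/
noncomputable def Bproj {n : ℕ} (xmap : (Fin (n - 1) → ℝ) → (Fin n → ℝ))
    (u : Fin (n - 1) → ℝ) (α : Fin (n - 1)) (i : Fin n) : ℝ :=
  fderiv ℝ xmap u (Pi.single α 1) i

/-- The second derivatives `B^i_{βα} = ∂²x^i/∂u^β∂u^α` of a hypersurface parametrization. -/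
noncomputable def B2 {n : ℕ} (xmap : (Fin (n - 1) → ℝ) → (Fin n → ℝ))
    (u : Fin (n - 1) → ℝ) (β α : Fin (n - 1)) (i : Fin n) : ℝ :=
  fderiv ℝ (fun w => fderiv ℝ xmap w (Pi.single α 1) i) u (Pi.single β 1)

/-- The supporting element `y^i = Σ_α v^α B^i_α` of the hypersurface. -/
noncomputable def yvec {n : ℕ} (xmap : (Fin (n - 1) → ℝ) → (Fin n → ℝ))
    (u : Fin (n - 1) → ℝ) (v : Fin (n - 1) → ℝ) : Fin n → ℝ :=
  fun i => ∑ α, v α * Bproj xmap u α i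

/-- The normal curvature vector `H_α = N_i (B^i_{0α} + N^i_j B^j_α)` of a hypersurface,
computed with respect to the metric `L` and a normal vector `N`, where
`N_i = Σ_j g_{ij} N^j`, `B^i_{0α} = Σ_β v^β B^i_{βα}`, and `N^i_j = ∂̇_j G^i`. -/
noncomputable def normalCurv {n : ℕ} (L : (Fin n → ℝ) → (Fin n → ℝ) → ℝ)
    (xmap : (Fin (n - 1) → ℝ) → (Fin n → ℝ))
    (u : Fin (n - 1) → ℝ) (v : Fin (n - 1) → ℝ)
    (N : Fin n → ℝ) (α : Fin (n - 1)) : ℝ :=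
  ∑ i, (∑ j, gten L (xmap u) i j (yvec xmap u v) * N j) *
    ((∑ β, v β * B2 xmap u β α i)
      + ∑ j, pdy (fun z => spray L (xmap u) z i) j (yvec xmap u v) * Bproj xmap u α j)

/-- The Randers conformal change `L*(x,y) = e^{σ(x)} L(x,y) + β(x,y)`. -/
noncomputable def RandersChange {n : ℕ} (L : (Fin n → ℝ) → (Fin n → ℝ) → ℝ)
    (σ : (Fin n → ℝ) → ℝ) (b : (Fin n → ℝ) → (Fin n → ℝ))
    (x y : Fin n → ℝ) : ℝ :=
  Real.exp (σ x) * L x y + ∑ j, b x j * y j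

/-- The factor `τ = e^{σ} L*/L` of the Randers conformal change. -/
noncomputable def tauRC {n : ℕ} (L : (Fin n → ℝ) → (Fin n → ℝ) → ℝ)
    (σ : (Fin n → ℝ) → ℝ) (b : (Fin n → ℝ) → (Fin n → ℝ))
    (x y : Fin n → ℝ) : ℝ :=
  Real.exp (σ x) * RandersChange L σ b x y / L x y

open Topology
open scoped ContDiff

section Calculus

variable {E F : Type*} [NormedAddCommGroup E] [NormedSpace ℝ E]
  [NormedAddCommGroup F] [NormedSpace ℝ F]

theorem DifferentiableAt.fderiv_comp_prodMk_left_apply {G : E × F → ℝ} {a : E} {b : F}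
    (hG : DifferentiableAt ℝ G (a, b)) (v : E) :
    fderiv ℝ (fun x => G (x, b)) a v = fderiv ℝ G (a, b) (v, 0) := by
  rw [show (fun x => G (x, b)) = G ∘ fun x => (x, b) from rfl,
    (hG.hasFDerivAt.comp a (hasFDerivAt_prodMk_left a b)).fderiv]
  simp

theorem DifferentiableAt.fderiv_comp_prodMk_right_apply {G : E × F → ℝ} {a : E} {b : F}
    (hG : DifferentiableAt ℝ G (a, b)) (w : F) :
    fderiv ℝ (fun z => G (a, z)) b w = fderiv ℝ G (a, b) (0, w) := by
  rw [show (fun z => G (a, z)) = G ∘ Prod.mk a from rfl,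
    (hG.hasFDerivAt.comp b (hasFDerivAt_prodMk_right a b)).fderiv]
  simp

variable {G : E × F → ℝ} {Ω : Set (E × F)} {k m : WithTop ℕ∞}

theorem ContDiffOn.fderiv_comp_prodMk_left_apply (hG : ContDiffOn ℝ k G Ω) (hΩ : IsOpen Ω)
    (hm : m + 1 ≤ k) (v : E) :
    ContDiffOn ℝ m (fun p : E × F => fderiv ℝ (fun x => G (x, p.2)) p.1 v) Ω := by
  refine ((hG.fderiv_of_isOpen hΩ hm).clm_apply (contDiffOn_const (c := (v, 0)))).congr
    fun p hp => ?_
  have hk : k ≠ 0 := ne_bot_of_le_ne_bot (by simp) hm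
  exact ((hG.contDiffAt (hΩ.mem_nhds hp)).differentiableAt hk).fderiv_comp_prodMk_left_apply v

theorem ContDiffOn.fderiv_comp_prodMk_right_apply (hG : ContDiffOn ℝ k G Ω) (hΩ : IsOpen Ω)
    (hm : m + 1 ≤ k) (w : F) :
    ContDiffOn ℝ m (fun p : E × F => fderiv ℝ (fun z => G (p.1, z)) p.2 w) Ω := by
  refine ((hG.fderiv_of_isOpen hΩ hm).clm_apply (contDiffOn_const (c := (0, w)))).congr
    fun p hp => ?_
  have hk : k ≠ 0 := ne_bot_of_le_ne_bot (by simp) hm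
  exact ((hG.contDiffAt (hΩ.mem_nhds hp)).differentiableAt hk).fderiv_comp_prodMk_right_apply w

theorem ContDiffOn.differentiableAt_comp_prodMk_right (hG : ContDiffOn ℝ k G Ω)
    (hΩ : IsOpen Ω) (hk : k ≠ 0) {a : E} {b : F} (hab : (a, b) ∈ Ω) :
    DifferentiableAt ℝ (fun z => G (a, z)) b :=
  ((hG.contDiffAt (hΩ.mem_nhds hab)).differentiableAt hk).comp b
    (hasFDerivAt_prodMk_right a b).differentiableAt

theorem fderiv_apply_self_of_homogeneous {f : E → ℝ} {y : E} {d : ℕ}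
    (hf : DifferentiableAt ℝ f y) (hhom : ∀ c : ℝ, 0 < c → f (c • y) = c ^ d * f y) :
    fderiv ℝ f y y = d * f y := by
  have hray : HasDerivAt (fun c : ℝ => f (c • y)) (fderiv ℝ f y y) 1 := by
    have hsmul : HasDerivAt (fun c : ℝ => c • y) y 1 := by
      simpa using (hasDerivAt_id (1 : ℝ)).smul_const y
    have hf1 : HasFDerivAt f (fderiv ℝ f y) ((1 : ℝ) • y) := by simpa using hf.hasFDerivAt
    exact hf1.comp_hasDerivAt 1 hsmul
  have hpow : HasDerivAt (fun c : ℝ => c ^ d * f y) (d * f y) 1 := by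
    simpa using (hasDerivAt_pow d (1 : ℝ)).mul_const (f y)
  refine hray.unique (hpow.congr_of_eventuallyEq ?_)
  filter_upwards [eventually_gt_nhds one_pos] with c hc
  exact hhom c hc

theorem fderiv_smul_of_homogeneous {f : E → ℝ} {c : ℝ} (hc : c ≠ 0) {z : E}
    (hfz : DifferentiableAt ℝ f z) (hfcz : DifferentiableAt ℝ f (c • z))
    (hhom : (fun w => f (c • w)) =ᶠ[𝓝 z] fun w => c * f w) :
    fderiv ℝ f (c • z) = fderiv ℝ f z := by
  have hcomp : HasFDerivAt (fun w => f (c • w)) ((fderiv ℝ f (c • z)).comp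
      (c • ContinuousLinearMap.id ℝ E)) z :=
    hfcz.hasFDerivAt.comp z (c • ContinuousLinearMap.id ℝ E).hasFDerivAt
  have hscaled : HasFDerivAt (fun w => c * f w) (c • fderiv ℝ f z) z :=
    hfz.hasFDerivAt.const_mul c
  have h := (hcomp.congr_of_eventuallyEq hhom.symm).unique hscaled
  ext w
  simpa [hc] using congrArg (fun φ : E →L[ℝ] ℝ => φ w) h

theorem DifferentiableAt.matrix_det {ι : Type*} [Fintype ι] [DecidableEq ι]
    {M : E → Matrix ι ι ℝ} {y : E}
    (h : ∀ a b, DifferentiableAt ℝ (fun z => M z a b) y) :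
    DifferentiableAt ℝ (fun z => (M z).det) y := by
  simp only [Matrix.det_apply']
  fun_prop

theorem DifferentiableAt.matrix_inv_apply {ι : Type*} [Fintype ι] [DecidableEq ι]
    {M : E → Matrix ι ι ℝ} {y : E}
    (h : ∀ a b, DifferentiableAt ℝ (fun z => M z a b) y) (hdet : (M y).det ≠ 0) (i r : ι) :
    DifferentiableAt ℝ (fun z => (M z)⁻¹ i r) y := by
  simp only [Matrix.inv_def, Ring.inverse_eq_inv', Matrix.smul_apply, Matrix.adjugate_apply,
    smul_eq_mul]
  refine ((DifferentiableAt.matrix_det h).inv hdet).mul (DifferentiableAt.matrix_det fun a b => ?_)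
  simp only [Matrix.updateRow_apply]
  split <;> fun_prop

end Calculus

theorem sum_sum_mul_mul_eq_sum_mul {ι : Type*} [Fintype ι] (g : ι → ι → ℝ) (w N : ι → ℝ) :
    ∑ i, ∑ j, g i j * w i * N j = ∑ i, (∑ j, g i j * N j) * w i := by
  simp only [Finset.sum_mul]
  exact Finset.sum_congr rfl fun i _ => Finset.sum_congr rfl fun j _ => by ring

theorem Matrix.det_ne_zero_of_sum_mul_pos {ι : Type*} [Fintype ι] [DecidableEq ι]
    {A : Matrix ι ι ℝ} (hA : ∀ w : ι → ℝ, w ≠ 0 → 0 < ∑ i, ∑ j, A i j * w i * w j) :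
    A.det ≠ 0 := by
  intro h0
  obtain ⟨w, hw, hAw⟩ := Matrix.exists_mulVec_eq_zero_iff.mpr h0
  have hrow : ∀ i, ∑ j, A i j * w j = 0 := fun i => congrFun hAw i
  have hpos := hA w hw
  rw [sum_sum_mul_mul_eq_sum_mul A w w] at hpos
  simp [hrow] at hpos

section Finsler

variable {n : ℕ}

theorem sum_mul_pdy (f : (Fin n → ℝ) → ℝ) (y w : Fin n → ℝ) :
    ∑ i, w i * pdy f i y = fderiv ℝ f y w := by
  conv_rhs => rw [pi_eq_sum_univ w, map_sum]
  refine Finset.sum_congr rfl fun i _ => ?_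
  rw [map_smul, smul_eq_mul, pdy]
  congr 3
  ext j
  simp [Pi.single_apply, eq_comm]

theorem pdy_eq_add_mul_coord_of_eventuallyEq {f g P : (Fin n → ℝ) → ℝ} {y : Fin n → ℝ}
    {i : Fin n} (hg : g =ᶠ[𝓝 y] fun z => f z + P z * z i)
    (hf : DifferentiableAt ℝ f y) (hP : DifferentiableAt ℝ P y) (j : Fin n) :
    pdy g j y = pdy f j y + P y * (Pi.single j 1 : Fin n → ℝ) i + y i * pdy P j y := by
  have hcoord : fderiv ℝ (fun z : Fin n → ℝ => z i) y = ContinuousLinearMap.proj i :=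
    (ContinuousLinearMap.proj (R := ℝ) (φ := fun _ : Fin n => ℝ) i).fderiv
  simp only [pdy]
  rw [hg.fderiv_eq, fderiv_fun_add hf (hP.fun_mul (by fun_prop)), fderiv_fun_mul hP (by fun_prop),
    hcoord]
  simp
  ring

theorem pdy2_sq {f : (Fin n → ℝ) → ℝ} {y : Fin n → ℝ} (hf : ContDiffAt ℝ 2 f y) (i j : Fin n) :
    pdy2 (fun z => f z ^ 2) i j y = 2 * (pdy f i y * pdy f j y + f y * pdy2 f i j y) := by
  have hnear : (fun z => fderiv ℝ (fun w => f w ^ 2) z (Pi.single j 1)) =ᶠ[𝓝 y]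
      fun z => 2 * f z * fderiv ℝ f z (Pi.single j 1) := by
    filter_upwards [hf.eventually (by simp)] with z hz
    rw [fderiv_fun_pow 2 (hz.differentiableAt (by simp))]
    simp
  have hfy : DifferentiableAt ℝ f y := hf.differentiableAt (by simp)
  have hℓ : DifferentiableAt ℝ (fun z => fderiv ℝ f z (Pi.single j 1)) y :=
    ((hf.fderiv_right (m := 1) (by norm_num)).clm_apply contDiffAt_const).differentiableAt
      (by simp)
  simp only [pdy2, hnear.fderiv_eq]
  rw [fderiv_fun_mul (hfy.const_mul 2) hℓ, fderiv_const_mul hfy]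
  simp [pdy]
  ring

theorem sum_mul_pdy_eq_of_homogeneous {f : (Fin n → ℝ) → ℝ} {y : Fin n → ℝ}
    (hf : DifferentiableAt ℝ f y) (hhom : ∀ c : ℝ, 0 < c → f (c • y) = c * f y) :
    ∑ i, y i * pdy f i y = f y := by
  rw [sum_mul_pdy, fderiv_apply_self_of_homogeneous (d := 1) hf
    fun c hc => by rw [hhom c hc, pow_one]]
  simp

theorem sum_mul_pdy2_eq_zero_of_homogeneous {f : (Fin n → ℝ) → ℝ}
    (hf : ContDiffOn ℝ ∞ f {z | z ≠ 0})
    (hhom : ∀ z : Fin n → ℝ, z ≠ 0 → ∀ c : ℝ, 0 < c → f (c • z) = c * f z)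
    {y : Fin n → ℝ} (hy : y ≠ 0) (j : Fin n) :
    ∑ i, y i * pdy2 f i j y = 0 := by
  have hdiff : ∀ z : Fin n → ℝ, z ≠ 0 → DifferentiableAt ℝ f z := fun z hz =>
    (hf.contDiffAt (isOpen_ne.mem_nhds hz)).differentiableAt (by simp)
  have hℓ : ContDiffOn ℝ ∞ (fun z => fderiv ℝ f z (Pi.single j 1)) {z | z ≠ 0} :=
    (hf.fderiv_of_isOpen isOpen_ne le_rfl).clm_apply contDiffOn_const
  have hℓhom : ∀ c : ℝ, 0 < c →
      fderiv ℝ f (c • y) (Pi.single j 1) = c ^ 0 * fderiv ℝ f y (Pi.single j 1) := by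
    intro c hc
    have hnear : (fun w => f (c • w)) =ᶠ[𝓝 y] fun w => c * f w := by
      filter_upwards [isOpen_ne.mem_nhds hy] with w hw
      exact hhom w hw c hc
    rw [fderiv_smul_of_homogeneous hc.ne' (hdiff y hy) (hdiff _ (smul_ne_zero hc.ne' hy)) hnear,
      pow_zero, one_mul]
  change ∑ i, y i * pdy (fun z => fderiv ℝ f z (Pi.single j 1)) i y = 0
  rw [sum_mul_pdy, fderiv_apply_self_of_homogeneous
    ((hℓ.contDiffAt (isOpen_ne.mem_nhds hy)).differentiableAt (by simp)) hℓhom]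
  simp

variable {L : (Fin n → ℝ) → (Fin n → ℝ) → ℝ} {σ : (Fin n → ℝ) → ℝ}
  {b : (Fin n → ℝ) → (Fin n → ℝ)} {x y : Fin n → ℝ}

theorem pdy_randersChange (hf : DifferentiableAt ℝ (L x) y) (j : Fin n) :
    pdy (RandersChange L σ b x) j y = Real.exp (σ x) * pdy (L x) j y + b x j := by
  have hlin : HasFDerivAt (fun z : Fin n → ℝ => ∑ m, b x m * z m)
      (∑ m, b x m • ContinuousLinearMap.proj (R := ℝ) (φ := fun _ : Fin n => ℝ) m) y :=
    HasFDerivAt.fun_sum fun m _ =>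
      (ContinuousLinearMap.proj (R := ℝ) (φ := fun _ : Fin n => ℝ) m).hasFDerivAt.const_mul _
  rw [pdy, show RandersChange L σ b x = fun z => Real.exp (σ x) * L x z + ∑ m, b x m * z m from rfl,
    ((hf.hasFDerivAt.const_mul _).fun_add hlin).fderiv]
  simp [pdy, Pi.single_apply]

theorem pdy2_randersChange (hf : ContDiffAt ℝ 2 (L x) y) (i j : Fin n) :
    pdy2 (RandersChange L σ b x) i j y = Real.exp (σ x) * pdy2 (L x) i j y := by
  have hnear : (fun z => fderiv ℝ (RandersChange L σ b x) z (Pi.single j 1)) =ᶠ[𝓝 y]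
      fun z => Real.exp (σ x) * fderiv ℝ (L x) z (Pi.single j 1) + b x j := by
    filter_upwards [hf.eventually (by simp)] with z hz
    exact pdy_randersChange (hz.differentiableAt (by simp)) j
  have hℓ : DifferentiableAt ℝ (fun z => fderiv ℝ (L x) z (Pi.single j 1)) y :=
    ((hf.fderiv_right (m := 1) (by norm_num)).clm_apply contDiffAt_const).differentiableAt
      (by simp)
  rw [pdy2, hnear.fderiv_eq, fderiv_add_const, fderiv_const_mul hℓ]
  rfl

theorem gten_eq_pdy_mul_pdy_add_mul_pdy2 (hf : ContDiffAt ℝ 2 (L x) y) (i j : Fin n) :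
    gten L x i j y = pdy (L x) i y * pdy (L x) j y + L x y * pdy2 (L x) i j y := by
  rw [gten, pdy2_sq hf]
  ring

theorem gten_randersChange (hf : ContDiffAt ℝ 2 (L x) y) (i j : Fin n) :
    gten (RandersChange L σ b) x i j y
      = (Real.exp (σ x) * pdy (L x) i y + b x i) * (Real.exp (σ x) * pdy (L x) j y + b x j)
        + RandersChange L σ b x y * (Real.exp (σ x) * pdy2 (L x) i j y) := by
  have hR : ContDiffAt ℝ 2 (RandersChange L σ b x) y := by
    unfold RandersChange
    fun_prop
  have hfy : DifferentiableAt ℝ (L x) y := hf.differentiableAt (by simp)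
  rw [gten, pdy2_sq hR, pdy_randersChange hfy, pdy_randersChange hfy, pdy2_randersChange hf]
  ring

theorem sum_gten_randersChange_mul (hf : ContDiffAt ℝ 2 (L x) y) (hL : L x y ≠ 0)
    {N : Fin n → ℝ} (hℓN : ∑ j, pdy (L x) j y * N j = 0) (hbN : ∑ j, b x j * N j = 0)
    (i : Fin n) :
    ∑ j, gten (RandersChange L σ b) x i j y * N j
      = tauRC L σ b x y * ∑ j, gten L x i j y * N j := by
  set e := Real.exp (σ x)
  set a := e * pdy (L x) i y + b x i
  calc ∑ j, gten (RandersChange L σ b) x i j y * N j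
      = ∑ j, (a * e * (pdy (L x) j y * N j) + a * (b x j * N j)
          + RandersChange L σ b x y * e * (pdy2 (L x) i j y * N j)) :=
        Finset.sum_congr rfl fun j _ => by rw [gten_randersChange hf]; ring
    _ = RandersChange L σ b x y * e * ∑ j, pdy2 (L x) i j y * N j := by
        simp only [Finset.sum_add_distrib, ← Finset.mul_sum, hℓN, hbN]
        ring
    _ = tauRC L σ b x y * ∑ j, (pdy (L x) i y * (pdy (L x) j y * N j)
          + L x y * (pdy2 (L x) i j y * N j)) := by
        simp only [Finset.sum_add_distrib, ← Finset.mul_sum, hℓN, tauRC]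
        field_simp
        ring
    _ = tauRC L σ b x y * ∑ j, gten L x i j y * N j := by
        congr 1
        exact Finset.sum_congr rfl fun j _ => by rw [gten_eq_pdy_mul_pdy_add_mul_pdy2 hf]; ring

theorem sum_gten_randersChange_mul_div_sqrt (hf : ContDiffAt ℝ 2 (L x) y) (hL : L x y ≠ 0)
    {N : Fin n → ℝ} (hℓN : ∑ j, pdy (L x) j y * N j = 0) (hbN : ∑ j, b x j * N j = 0)
    (i : Fin n) :
    ∑ j, gten (RandersChange L σ b) x i j y * (N j / √(tauRC L σ b x y))
      = √(tauRC L σ b x y) * ∑ j, gten L x i j y * N j := by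
  calc _ = (∑ j, gten (RandersChange L σ b) x i j y * N j) / √(tauRC L σ b x y) := by
        simp only [Finset.sum_div, mul_div_assoc]
    _ = _ := by
        rw [sum_gten_randersChange_mul hf hL hℓN hbN, mul_div_right_comm, Real.div_sqrt]

theorem sum_mul_gten_eq_mul_pdy (hf : ContDiffOn ℝ ∞ (L x) {z | z ≠ 0})
    (hhom : ∀ z : Fin n → ℝ, z ≠ 0 → ∀ c : ℝ, 0 < c → L x (c • z) = c * L x z)
    (hy : y ≠ 0) (j : Fin n) :
    ∑ i, y i * gten L x i j y = L x y * pdy (L x) j y := by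
  have hf2 : ContDiffAt ℝ 2 (L x) y := (hf.contDiffAt (isOpen_ne.mem_nhds hy)).of_le (by norm_cast)
  calc ∑ i, y i * gten L x i j y
      = (∑ i, y i * pdy (L x) i y) * pdy (L x) j y
          + L x y * ∑ i, y i * pdy2 (L x) i j y := by
        simp only [gten_eq_pdy_mul_pdy_add_mul_pdy2 hf2, Finset.sum_mul, Finset.mul_sum,
          ← Finset.sum_add_distrib]
        exact Finset.sum_congr rfl fun i _ => by ring
    _ = L x y * pdy (L x) j y := by
        rw [sum_mul_pdy_eq_of_homogeneous (hf2.differentiableAt (by simp)) (hhom y hy),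
          sum_mul_pdy2_eq_zero_of_homogeneous hf hhom hy]
        ring

theorem contDiffOn_gten {Ω : Set ((Fin n → ℝ) × (Fin n → ℝ))}
    (hL : ContDiffOn ℝ ∞ (fun p : (Fin n → ℝ) × (Fin n → ℝ) => L p.1 p.2) Ω) (hΩ : IsOpen Ω)
    (i j : Fin n) :
    ContDiffOn ℝ ∞ (fun p : (Fin n → ℝ) × (Fin n → ℝ) => gten L p.1 i j p.2) Ω :=
  contDiffOn_const.mul <|
    ((hL.pow 2).fderiv_comp_prodMk_right_apply hΩ le_rfl _).fderiv_comp_prodMk_right_apply hΩ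
      le_rfl _

theorem differentiableAt_spray {Ω : Set ((Fin n → ℝ) × (Fin n → ℝ))}
    (hL : ContDiffOn ℝ ∞ (fun p : (Fin n → ℝ) × (Fin n → ℝ) => L p.1 p.2) Ω) (hΩ : IsOpen Ω)
    (hxy : (x, y) ∈ Ω) (hdet : (gmat L x y).det ≠ 0) (i : Fin n) :
    DifferentiableAt ℝ (fun z => spray L x z i) y := by
  have hg : ∀ a c, DifferentiableAt ℝ (fun z => gten L x a c z) y := fun a c =>
    (contDiffOn_gten hL hΩ a c).differentiableAt_comp_prodMk_right hΩ (by simp) hxy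
  have hdg : ∀ a c k, DifferentiableAt ℝ (fun z => pdx (fun x' => gten L x' a c z) k x) y :=
    fun a c k => ((contDiffOn_gten hL hΩ a c).fderiv_comp_prodMk_left_apply (m := ∞) hΩ le_rfl
      (Pi.single k 1)).differentiableAt_comp_prodMk_right hΩ (by simp) hxy
  have hinv : ∀ a c, DifferentiableAt ℝ (fun z => (gmat L x z)⁻¹ a c) y :=
    DifferentiableAt.matrix_inv_apply hg hdet
  have hcoord : ∀ m, DifferentiableAt ℝ (fun z : Fin n → ℝ => z m) y := fun m => by fun_prop
  unfold spray
  refine (DifferentiableAt.fun_sum fun j _ => DifferentiableAt.fun_sum fun k _ => ?_).const_mul _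
  refine (DifferentiableAt.mul ?_ (hcoord j)).mul (hcoord k)
  exact (DifferentiableAt.fun_sum fun r _ =>
    (hinv i r).mul (((hdg j r k).add (hdg k r j)).sub (hdg j k r))).const_mul _

end Finsler

section Hypersurface

variable {n : ℕ} {xmap : (Fin (n - 1) → ℝ) → (Fin n → ℝ)} {u v : Fin (n - 1) → ℝ}

theorem sum_mul_yvec (c : Fin n → ℝ) :
    ∑ i, c i * yvec xmap u v i = ∑ α, v α * ∑ i, c i * Bproj xmap u α i := by
  simp only [yvec, Finset.mul_sum]
  rw [Finset.sum_comm]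
  exact Finset.sum_congr rfl fun α _ => Finset.sum_congr rfl fun i _ => by ring

theorem sum_pdy_mul_eq_zero_of_normal {L : (Fin n → ℝ) → (Fin n → ℝ) → ℝ} {N : Fin n → ℝ}
    (hf : ContDiffOn ℝ ∞ (L (xmap u)) {z | z ≠ 0})
    (hhom : ∀ z : Fin n → ℝ, z ≠ 0 → ∀ c : ℝ, 0 < c → L (xmap u) (c • z) = c * L (xmap u) z)
    (hy : yvec xmap u v ≠ 0) (hL : L (xmap u) (yvec xmap u v) ≠ 0)
    (hN : ∀ α, ∑ i, (∑ j, gten L (xmap u) i j (yvec xmap u v) * N j) * Bproj xmap u α i = 0) :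
    ∑ j, pdy (L (xmap u)) j (yvec xmap u v) * N j = 0 := by
  set y := yvec xmap u v
  have hNy : ∑ i, (∑ j, gten L (xmap u) i j y * N j) * y i = 0 := by
    simp [y, sum_mul_yvec, hN]
  have hEuler : ∑ i, (∑ j, gten L (xmap u) i j y * N j) * y i
      = L (xmap u) y * ∑ j, pdy (L (xmap u)) j y * N j := by
    calc ∑ i, (∑ j, gten L (xmap u) i j y * N j) * y i
        = ∑ j, (∑ i, y i * gten L (xmap u) i j y) * N j := by
          simp only [Finset.sum_mul]
          rw [Finset.sum_comm]
          exact Finset.sum_congr rfl fun j _ => Finset.sum_congr rfl fun i _ => by ring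
      _ = L (xmap u) y * ∑ j, pdy (L (xmap u)) j y * N j := by
          simp only [sum_mul_gten_eq_mul_pdy hf hhom hy, Finset.mul_sum, mul_assoc]
  exact (mul_eq_zero.mp (hEuler ▸ hNy)).resolve_left hL

theorem normalCurv_eq_mul_of_projective {L L' : (Fin n → ℝ) → (Fin n → ℝ) → ℝ}
    {N N' : Fin n → ℝ} {s p : ℝ} {dp : Fin n → ℝ}
    (hN : ∀ α, ∑ i, (∑ j, gten L (xmap u) i j (yvec xmap u v) * N j) * Bproj xmap u α i = 0)
    (hlower : ∀ i, ∑ j, gten L' (xmap u) i j (yvec xmap u v) * N' j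
      = s * ∑ j, gten L (xmap u) i j (yvec xmap u v) * N j)
    (hconn : ∀ i j, pdy (fun z => spray L' (xmap u) z i) j (yvec xmap u v)
      = pdy (fun z => spray L (xmap u) z i) j (yvec xmap u v)
        + p * (Pi.single j 1 : Fin n → ℝ) i + yvec xmap u v i * dp j)
    (α : Fin (n - 1)) :
    normalCurv L' xmap u v N' α = s * normalCurv L xmap u v N α := by
  unfold normalCurv
  set y := yvec xmap u v
  set M := fun i => ∑ j, gten L (xmap u) i j y * N j
  set B0 := fun i => ∑ β, v β * B2 xmap u β α i
  have hNB : ∀ β, ∑ i, M i * Bproj xmap u β i = 0 := hN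
  have hNy : ∑ i, M i * y i = 0 := by simp [y, sum_mul_yvec, hNB]
  have hshift : ∀ i, ∑ j, pdy (fun z => spray L' (xmap u) z i) j y * Bproj xmap u α j
      = ∑ j, pdy (fun z => spray L (xmap u) z i) j y * Bproj xmap u α j
        + p * Bproj xmap u α i + y i * ∑ j, dp j * Bproj xmap u α j := by
    intro i
    simp only [hconn, add_mul, Finset.sum_add_distrib, Finset.mul_sum, Pi.single_apply]
    simp [mul_assoc]
  calc ∑ i, (∑ j, gten L' (xmap u) i j y * N' j) *
        (B0 i + ∑ j, pdy (fun z => spray L' (xmap u) z i) j y * Bproj xmap u α j)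
      = ∑ i, s * (M i * (B0 i + ∑ j, pdy (fun z => spray L (xmap u) z i) j y * Bproj xmap u α j)
          + p * (M i * Bproj xmap u α i) + (∑ j, dp j * Bproj xmap u α j) * (M i * y i)) := by
        simp only [hlower, hshift]
        exact Finset.sum_congr rfl fun i _ => by ring
    _ = s * ∑ i, M i * (B0 i
          + ∑ j, pdy (fun z => spray L (xmap u) z i) j y * Bproj xmap u α j) := by
        simp only [← Finset.mul_sum, Finset.sum_add_distrib, hNB α, hNy]
        ring

end Hypersurface

theorem randers_conformal_normal_curvature_general
    {n : ℕ} (U : Set (Fin n → ℝ)) (hU : IsOpen U)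
    (L : (Fin n → ℝ) → (Fin n → ℝ) → ℝ)
    (hL : ContDiffOn ℝ (⊤ : ℕ∞)
      (fun p : (Fin n → ℝ) × (Fin n → ℝ) => L p.1 p.2)
      (U ×ˢ {y : Fin n → ℝ | y ≠ 0}))
    (hLpos : ∀ x ∈ U, ∀ y : Fin n → ℝ, y ≠ 0 → 0 < L x y)
    (hLhom : ∀ x ∈ U, ∀ y : Fin n → ℝ, y ≠ 0 → ∀ c : ℝ, 0 < c →
      L x (c • y) = c * L x y)
    (σ : (Fin n → ℝ) → ℝ)
    (b : (Fin n → ℝ) → (Fin n → ℝ))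
    (V : Set (Fin (n - 1) → ℝ))
    (xmap : (Fin (n - 1) → ℝ) → (Fin n → ℝ))
    (hxU : ∀ u ∈ V, xmap u ∈ U)
    (u : Fin (n - 1) → ℝ) (hu : u ∈ V)
    (v : Fin (n - 1) → ℝ) (hy : yvec xmap u v ≠ 0)
    (hposdef : ∀ w : Fin n → ℝ, w ≠ 0 →
      0 < ∑ i, ∑ j, gten L (xmap u) i j (yvec xmap u v) * w i * w j)
    (N : Fin n → ℝ)
    (hN1 : ∀ α, ∑ i, ∑ j,
      gten L (xmap u) i j (yvec xmap u v) * Bproj xmap u α i * N j = 0)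
    (hbN : ∑ i, b (xmap u) i * N i = 0)
    (P : (Fin n → ℝ) → (Fin n → ℝ) → ℝ)
    (hP : ContDiffOn ℝ (⊤ : ℕ∞)
      (fun p : (Fin n → ℝ) × (Fin n → ℝ) => P p.1 p.2)
      (U ×ˢ {y : Fin n → ℝ | y ≠ 0}))
    (hproj : ∀ x ∈ U, ∀ y : Fin n → ℝ, y ≠ 0 → ∀ i : Fin n,
      spray (RandersChange L σ b) x y i = spray L x y i + P x y * y i) :
    ∀ α : Fin (n - 1),
      normalCurv (RandersChange L σ b) xmap u v
          (fun i => N i / Real.sqrt (tauRC L σ b (xmap u) (yvec xmap u v))) α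
        = Real.sqrt (tauRC L σ b (xmap u) (yvec xmap u v))
            * normalCurv L xmap u v N α := by
  have hx : xmap u ∈ U := hxU u hu
  have hΩ : IsOpen (U ×ˢ {y : Fin n → ℝ | y ≠ 0}) := hU.prod isOpen_ne
  have hLx : ContDiffOn ℝ ∞ (L (xmap u)) {z | z ≠ 0} :=
    hL.comp (f := fun z => (xmap u, z)) (by fun_prop) fun z hz => ⟨hx, hz⟩
  have hLx2 : ContDiffAt ℝ 2 (L (xmap u)) (yvec xmap u v) :=
    (hLx.contDiffAt (isOpen_ne.mem_nhds hy)).of_le (by norm_cast)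
  have hL0 : L (xmap u) (yvec xmap u v) ≠ 0 := (hLpos _ hx _ hy).ne'
  have hNB := fun β => (sum_sum_mul_mul_eq_sum_mul _ _ N).symm.trans (hN1 β)
  have hℓN := sum_pdy_mul_eq_zero_of_normal hLx (hLhom _ hx) hy hL0 hNB
  have hspray := differentiableAt_spray hL hΩ ⟨hx, hy⟩
    (Matrix.det_ne_zero_of_sum_mul_pos hposdef)
  have hPx : DifferentiableAt ℝ (P (xmap u)) (yvec xmap u v) :=
    hP.differentiableAt_comp_prodMk_right hΩ (by simp) ⟨hx, hy⟩
  refine normalCurv_eq_mul_of_projective hNB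
    (sum_gten_randersChange_mul_div_sqrt hLx2 hL0 hℓN hbN) fun i =>
      pdy_eq_add_mul_coord_of_eventuallyEq ?_ (hspray i) hPx
  filter_upwards [isOpen_ne.mem_nhds hy] with z hz using hproj _ hx z hz i

/-- Under a projective Randers conformal change, with `b` tangential to the hypersurface,
the normal curvature computed with the unit normal `N* = N/√τ` satisfies
`H*_α = √τ H_α`. -/
theorem randers_conformal_normal_curvature
    {n : ℕ} (U : Set (Fin n → ℝ)) (hU : IsOpen U)
    (L : (Fin n → ℝ) → (Fin n → ℝ) → ℝ)
    (hL : ContDiffOn ℝ (⊤ : ℕ∞)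
      (fun p : (Fin n → ℝ) × (Fin n → ℝ) => L p.1 p.2)
      (U ×ˢ {y : Fin n → ℝ | y ≠ 0}))
    (hLpos : ∀ x ∈ U, ∀ y : Fin n → ℝ, y ≠ 0 → 0 < L x y)
    (hLhom : ∀ x ∈ U, ∀ y : Fin n → ℝ, y ≠ 0 → ∀ c : ℝ, 0 < c →
      L x (c • y) = c * L x y)
    (σ : (Fin n → ℝ) → ℝ) (hσ : ContDiffOn ℝ (⊤ : ℕ∞) σ U)
    (b : (Fin n → ℝ) → (Fin n → ℝ)) (hb : ContDiffOn ℝ (⊤ : ℕ∞) b U)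
    (V : Set (Fin (n - 1) → ℝ)) (hV : IsOpen V)
    (xmap : (Fin (n - 1) → ℝ) → (Fin n → ℝ))
    (hxmap : ContDiffOn ℝ (⊤ : ℕ∞) xmap V)
    (hxU : ∀ u ∈ V, xmap u ∈ U)
    (u : Fin (n - 1) → ℝ) (hu : u ∈ V)
    (hrank : LinearIndependent ℝ (fun α : Fin (n - 1) => fun i => Bproj xmap u α i))
    (v : Fin (n - 1) → ℝ) (hy : yvec xmap u v ≠ 0)
    (hposdef : ∀ w : Fin n → ℝ, w ≠ 0 →
      0 < ∑ i, ∑ j, gten L (xmap u) i j (yvec xmap u v) * w i * w j)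
    (hLstar : 0 < RandersChange L σ b (xmap u) (yvec xmap u v))
    (N : Fin n → ℝ)
    (hN1 : ∀ α, ∑ i, ∑ j,
      gten L (xmap u) i j (yvec xmap u v) * Bproj xmap u α i * N j = 0)
    (hN2 : ∑ i, ∑ j, gten L (xmap u) i j (yvec xmap u v) * N i * N j = 1)
    (hbN : ∑ i, b (xmap u) i * N i = 0)
    (P : (Fin n → ℝ) → (Fin n → ℝ) → ℝ)
    (hP : ContDiffOn ℝ (⊤ : ℕ∞)
      (fun p : (Fin n → ℝ) × (Fin n → ℝ) => P p.1 p.2)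
      (U ×ˢ {y : Fin n → ℝ | y ≠ 0}))
    (hproj : ∀ x ∈ U, ∀ y : Fin n → ℝ, y ≠ 0 → ∀ i : Fin n,
      spray (RandersChange L σ b) x y i = spray L x y i + P x y * y i) :
    ∀ α : Fin (n - 1),
      normalCurv (RandersChange L σ b) xmap u v
          (fun i => N i / Real.sqrt (tauRC L σ b (xmap u) (yvec xmap u v))) α
        = Real.sqrt (tauRC L σ b (xmap u) (yvec xmap u v))
            * normalCurv L xmap u v N α :=
  randers_conformal_normal_curvature_general U hU L hL hLpos hLhom σ b V xmap hxU u hu v hy hposdef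
    N hN1 hbN P hP hproj
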